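/- arXiv:2305.02188 — 7 statements merged into one kernel-verified Lean document; each statement's English description precedes it below -/
import Mathlib

section
/- Let q ≥ 2 be an integer and define the q-th Fuss–Catalan numbers c_N = (1/((q−1)N+1))·binom(qN, N) ∈ ℚ for N ≥ 0. Then c_0 = 1 and, for every integer N ≥ 1, c_N = Σ_{(m_1,…,m_q) ∈ ℕ^q, m_1+⋯+m_q = N−1} ∏_{j=1}^{q} c_{m_j}. -/
/-!
Embed `c_N` in the Raney numbers `A_n(r) = r/(qn+r) · binom(qn+r, n)`, so that `c_N = A_N(1)`.
They satisfy the Pascal-type rule `A_{n+1}(r+1) = A_{n+1}(r) + A_n(r+q)`, from which a double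
induction on `n` and `r` gives the convolution `Σ_{i+j=n} A_i(1) A_j(r) = A_n(r+1)`. Iterating it,
the sum over `q`-tuples of products of `A(1)` is `A_{N-1}(q)`, and the Pascal rule at `r = 0`
identifies this with `A_N(1)`.
-/

open Finset Polynomial
open scoped Nat

theorem Finset.Nat.sum_antidiagonalTuple_succ {M : Type*} [AddCommMonoid M] (k n : ℕ)
    (f : (Fin (k + 1) → ℕ) → M) :
    ∑ x ∈ Nat.antidiagonalTuple (k + 1) n, f x =
      ∑ p ∈ antidiagonal n, ∑ x ∈ Nat.antidiagonalTuple k p.2, f (Fin.cons p.1 x) := by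
  rw [sum_sigma']
  refine sum_nbij' (fun x => ⟨(x 0, ∑ j, Fin.tail x j), Fin.tail x⟩)
    (fun y => Fin.cons y.1.1 y.2) ?_ ?_ (fun x _ => Fin.cons_self_tail x) ?_ ?_
  · intro x hx
    simp only [mem_sigma, HasAntidiagonal.mem_antidiagonal, Nat.mem_antidiagonalTuple] at hx ⊢
    refine ⟨?_, trivial⟩
    rw [← hx, Fin.sum_univ_succ]
    rfl
  · rintro ⟨p, x⟩ hx
    simp only [mem_sigma, HasAntidiagonal.mem_antidiagonal, Nat.mem_antidiagonalTuple] at hx ⊢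
    rw [Fin.sum_cons, hx.2, hx.1]
  · rintro ⟨p, x⟩ hx
    simp only [mem_sigma, HasAntidiagonal.mem_antidiagonal, Nat.mem_antidiagonalTuple] at hx
    simp only [Fin.cons_zero, Fin.tail_cons, hx.2]
  · intro x _
    simp only [Fin.cons_self_tail]

theorem Finset.Nat.sum_antidiagonalTuple_succ_prod {R : Type*} [CommSemiring R] (g : ℕ → R)
    (k n : ℕ) :
    ∑ x ∈ Nat.antidiagonalTuple (k + 1) n, ∏ j, g (x j) =
      ∑ p ∈ antidiagonal n, g p.1 * ∑ x ∈ Nat.antidiagonalTuple k p.2, ∏ j, g (x j) := by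
  simp only [Nat.sum_antidiagonalTuple_succ, Fin.prod_univ_succ, Fin.cons_zero, Fin.cons_succ,
    mul_sum]

/-- `raney q r n = r/(qn+r) · binom(qn+r, n)`, written as a polynomial in `r` so that no division
by `qn + r` occurs. -/
noncomputable def raney (q r : ℚ) : ℕ → ℚ
  | 0 => 1
  | n + 1 => r * (descPochhammer ℚ n).eval (q * (n + 1) + r - 1) / (n + 1)!

@[simp]
theorem raney_zero (q r : ℚ) : raney q r 0 = 1 := rfl

theorem raney_succ (q r : ℚ) (n : ℕ) :
    raney q r (n + 1) = r * (descPochhammer ℚ n).eval (q * (n + 1) + r - 1) / (n + 1)! := rfl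

@[simp]
theorem raney_zero_left_succ (q : ℚ) (n : ℕ) : raney q 0 (n + 1) = 0 := by
  simp [raney_succ]

theorem raney_add_one_succ (q r : ℚ) (n : ℕ) :
    raney q (r + 1) (n + 1) = raney q r (n + 1) + raney q (r + q) n := by
  cases n with
  | zero => simp [raney_succ]
  | succ n =>
    set x := q * (n + 2) + r - 1
    have hshift :
        (descPochhammer ℚ (n + 1)).eval (x + 1) = (x + 1) * (descPochhammer ℚ n).eval x := by
      simp [descPochhammer_succ_left]
    simp only [raney_succ]
    push_cast
    rw [show q * (n + 1 + 1) + (r + 1) - 1 = x + 1 by ring,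
      show q * (n + 1 + 1) + r - 1 = x by ring, show q * (n + 1) + (r + q) - 1 = x by ring,
      hshift, descPochhammer_succ_eval, Nat.factorial_succ (n + 1)]
    push_cast
    -- cancelling the common factor `(descPochhammer ℚ n).eval x` leaves
    -- `(r+1)(x+1) - r(x-n) = (n+2)(r+q)`
    field_simp
    ring

theorem raney_one_succ (q : ℚ) (n : ℕ) : raney q 1 (n + 1) = raney q q n := by
  simpa using raney_add_one_succ q 0 n

theorem sum_antidiagonal_raney_one_mul (q r n : ℕ) :
    ∑ p ∈ antidiagonal n, raney q 1 p.1 * raney q r p.2 = raney q (r + 1) n := by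
  induction n generalizing r with
  | zero => simp
  | succ n ih =>
    induction r with
    | zero => simp [Nat.sum_antidiagonal_succ']
    | succ r ihr =>
      push_cast at ihr ⊢
      calc ∑ p ∈ antidiagonal (n + 1), raney q 1 p.1 * raney q (r + 1) p.2
          = ∑ p ∈ antidiagonal (n + 1), raney q 1 p.1 * raney q r p.2
            + ∑ p ∈ antidiagonal n, raney q 1 p.1 * raney q (r + q) p.2 := by
            simp only [Nat.sum_antidiagonal_succ', raney_add_one_succ, raney_zero, mul_add,
              sum_add_distrib]
            ring
        _ = raney q (r + 1) (n + 1) + raney q (r + 1 + q) n := by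
            have ih' := ih (r + q)
            push_cast at ih'
            rw [ihr, ih', add_right_comm (r : ℚ)]
        _ = raney q (r + 1 + 1) (n + 1) := (raney_add_one_succ _ _ _).symm

theorem sum_antidiagonalTuple_prod_raney_one (q k n : ℕ) :
    ∑ x ∈ Nat.antidiagonalTuple k n, ∏ j, raney q 1 (x j) = raney q k n := by
  induction k generalizing n with
  | zero => cases n <;> simp
  | succ k ih =>
    rw [Nat.sum_antidiagonalTuple_succ_prod]
    simp only [ih]
    exact_mod_cast sum_antidiagonal_raney_one_mul q k n

theorem raney_one_eq_choose (q n : ℕ) (hq : 1 ≤ q) :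
    raney q 1 n = 1 / (((q : ℚ) - 1) * n + 1) * ((q * n).choose n : ℚ) := by
  cases n with
  | zero => simp
  | succ n =>
    have hq' : (1 : ℚ) ≤ q := by exact_mod_cast hq
    have hden : ((q : ℚ) - 1) * (n + 1) + 1 ≠ 0 := by nlinarith
    rw [raney_succ, Nat.cast_choose_eq_descPochhammer_div, descPochhammer_succ_eval]
    push_cast
    rw [add_sub_cancel_right, show (q : ℚ) * (n + 1) - n = (q - 1) * (n + 1) + 1 by ring]
    generalize ((q : ℚ) - 1) * (n + 1) + 1 = d at hden ⊢
    field_simp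

/-- The `q`-th Fuss–Catalan numbers `c_N = (1/((q−1)N+1))·binom(qN, N)` satisfy `c_0 = 1`
and the recursion `c_N = Σ_{m_1+⋯+m_q = N−1} ∏_j c_{m_j}` for `N ≥ 1`. -/
theorem fuss_catalan_recursion (q : ℕ) (hq : 2 ≤ q) (c : ℕ → ℚ)
    (hc : ∀ N : ℕ, c N = (1 / (((q : ℚ) - 1) * N + 1)) * (Nat.choose (q * N) N : ℚ)) :
    c 0 = 1 ∧
      ∀ N : ℕ, 1 ≤ N →
        c N = ∑ m ∈ Finset.Nat.antidiagonalTuple q (N - 1), ∏ j : Fin q, c (m j) := by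
  have hc_raney : ∀ n, c n = raney q 1 n := fun n => by
    rw [hc, raney_one_eq_choose q n (by omega)]
  refine ⟨by simp [hc_raney], fun N hN => ?_⟩
  obtain ⟨M, rfl⟩ := Nat.exists_eq_add_of_le' hN
  simp only [hc_raney, Nat.add_sub_cancel, raney_one_succ, sum_antidiagonalTuple_prod_raney_one]
end

section
/- Let M ≥ 0 and 0 ≤ p ≤ M be integers. The number of lists ε = (ε_1, …, ε_{2M}) with each ε_i ∈ {+1, −1}, all partial sums ε_1 + ⋯ + ε_k ≥ 0 (for 1 ≤ k ≤ 2M), and total sum ε_1 + ⋯ + ε_{2M} = 2p, equals binom(2M, M+p) − binom(2M, M+p+1). -/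
/-!
Appending a step `±1` to a nonnegative path of height `h ∓ 1` gives every nonnegative path of
height `h ≥ 0` exactly once, so the counts `N(n, h)` satisfy `N(n+1, h) = N(n, h-1) + N(n, h+1)`.
Writing `n + h = 2m`, the ballot numbers `choose n m - choose n (m+1)` satisfy the same recurrence
by Pascal's rule; at height `h = -1`, i.e. `n = 2m + 1`, they vanish by the symmetry of the
binomial coefficients, which matches the absence of paths ending below zero.
-/

open Finset

def nonnegPaths (n : ℕ) (h : ℤ) : Set (Fin n → ℤ) :=
  {ε | (∀ i, ε i = 1 ∨ ε i = -1) ∧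
    (∀ k : ℕ, 1 ≤ k → k ≤ n → 0 ≤ ∑ i ∈ univ.filter (fun i : Fin n => (i : ℕ) < k), ε i) ∧
    ∑ i, ε i = h}

lemma sum_filter_val_lt_snoc {M : Type*} [AddCommMonoid M] {n k : ℕ} (ε : Fin n → M) (c : M)
    (hk : k ≤ n) :
    ∑ i ∈ univ.filter (fun i : Fin (n + 1) => (i : ℕ) < k), Fin.snoc ε c i
      = ∑ i ∈ univ.filter (fun i : Fin n => (i : ℕ) < k), ε i := by
  rw [sum_filter, sum_filter, Fin.sum_univ_castSucc]
  simp only [Fin.val_castSucc, Fin.snoc_castSucc, Fin.snoc_last, Fin.val_last,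
    if_neg (show ¬n < k by omega), add_zero]

lemma filter_val_lt_eq_univ {n k : ℕ} (hk : n ≤ k) :
    univ.filter (fun i : Fin n => (i : ℕ) < k) = univ :=
  filter_true_of_mem fun i _ => i.isLt.trans_le hk

namespace nonnegPaths

variable {n : ℕ} {h : ℤ}

lemma finite (n : ℕ) (h : ℤ) : (nonnegPaths n h).Finite :=
  (Set.Finite.pi fun _ => (Set.finite_singleton (1 : ℤ)).insert (-1)).subset
    fun ε hε i _ => by rcases hε.1 i with h1 | h1 <;> simp [h1]

lemma eq_empty_of_neg (hh : h < 0) : nonnegPaths n h = ∅ := by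
  refine Set.eq_empty_of_forall_notMem fun ε ⟨_, hpartial, hsum⟩ => ?_
  rcases Nat.eq_zero_or_pos n with rfl | hn
  · simp only [univ_eq_empty, sum_empty] at hsum
    omega
  · have := hpartial n hn le_rfl
    rw [filter_val_lt_eq_univ le_rfl, hsum] at this
    omega

lemma eq_empty_of_length_lt (hh : (n : ℤ) < h) : nonnegPaths n h = ∅ := by
  refine Set.eq_empty_of_forall_notMem fun ε ⟨hstep, _, hsum⟩ => ?_
  have : ∑ i, ε i ≤ ∑ _i : Fin n, (1 : ℤ) :=
    sum_le_sum fun i _ => by rcases hstep i with h1 | h1 <;> simp [h1]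
  simp only [sum_const, card_univ, Fintype.card_fin, nsmul_eq_mul, mul_one, hsum] at this
  omega

lemma zero_zero : nonnegPaths 0 0 = Set.univ :=
  Set.eq_univ_of_forall fun _ => ⟨finZeroElim, fun _ _ _ => by omega, by simp⟩

lemma snoc_mem {ε : Fin n → ℤ} {c : ℤ} (hc : c = 1 ∨ c = -1) (hh : 0 ≤ h)
    (hε : ε ∈ nonnegPaths n (h - c)) : Fin.snoc ε c ∈ nonnegPaths (n + 1) h := by
  obtain ⟨hstep, hpartial, hsum⟩ := hε
  have htotal : ∑ i, (Fin.snoc ε c : Fin (n + 1) → ℤ) i = h := by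
    rw [Fin.sum_snoc, hsum, sub_add_cancel]
  refine ⟨Fin.lastCases (by simpa using hc) (by simpa using hstep), fun k hk1 hk2 => ?_, htotal⟩
  rcases Nat.lt_or_ge k (n + 1) with hk | hk
  · rw [sum_filter_val_lt_snoc ε c (by omega)]
    exact hpartial k hk1 (by omega)
  · rwa [filter_val_lt_eq_univ hk, htotal]

lemma init_mem {ε : Fin (n + 1) → ℤ} (hε : ε ∈ nonnegPaths (n + 1) h) :
    Fin.init ε ∈ nonnegPaths n (h - ε (Fin.last n)) := by
  obtain ⟨hstep, hpartial, hsum⟩ := hε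
  refine ⟨fun i => hstep i.castSucc, fun k hk1 hk2 => ?_, ?_⟩
  · have := hpartial k hk1 (by omega)
    rwa [← Fin.snoc_init_self ε, sum_filter_val_lt_snoc _ _ hk2] at this
  · rw [← hsum, ← Fin.snoc_init_self ε, Fin.sum_snoc]
    simp

lemma succ_eq_union (hh : 0 ≤ h) :
    nonnegPaths (n + 1) h = (Fin.snoc (α := fun _ => ℤ) · 1) '' nonnegPaths n (h - 1)
      ∪ (Fin.snoc (α := fun _ => ℤ) · (-1)) '' nonnegPaths n (h + 1) := by
  ext ε
  constructor
  · intro hε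
    have hinit := init_mem hε
    rcases hε.1 (Fin.last n) with hlast | hlast <;> rw [hlast] at hinit
    · exact Or.inl ⟨_, hinit, by rw [← hlast]; exact Fin.snoc_init_self ε⟩
    · exact Or.inr ⟨_, by rwa [sub_neg_eq_add] at hinit, by rw [← hlast]; exact Fin.snoc_init_self ε⟩
  · rintro (⟨ε', hε', rfl⟩ | ⟨ε', hε', rfl⟩)
    · exact snoc_mem (.inl rfl) hh hε'
    · exact snoc_mem (.inr rfl) hh (by rwa [sub_neg_eq_add])

lemma ncard_succ (hh : 0 ≤ h) :
    (nonnegPaths (n + 1) h).ncard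
      = (nonnegPaths n (h - 1)).ncard + (nonnegPaths n (h + 1)).ncard := by
  have hdisjoint : Disjoint ((Fin.snoc (α := fun _ => ℤ) · 1) '' nonnegPaths n (h - 1))
      ((Fin.snoc (α := fun _ => ℤ) · (-1)) '' nonnegPaths n (h + 1)) := by
    rw [Set.disjoint_left]
    rintro _ ⟨_, -, rfl⟩ ⟨_, -, hsnoc⟩
    simpa using congrFun hsnoc (Fin.last n)
  rw [succ_eq_union hh, Set.ncard_union_eq hdisjoint ((finite _ _).image _) ((finite _ _).image _),
    Set.ncard_image_of_injective _ (Fin.snoc_left_injective (α := fun _ => ℤ) 1),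
    Set.ncard_image_of_injective _ (Fin.snoc_left_injective (α := fun _ => ℤ) (-1))]

theorem ncard_eq_choose_sub_choose (n m : ℕ) (h : ℤ) (hnh : n + h = 2 * m) (hh : -1 ≤ h) :
    ((nonnegPaths n h).ncard : ℤ) = n.choose m - n.choose (m + 1) := by
  induction n generalizing m h with
  | zero =>
    rcases m with _ | m
    · obtain rfl : h = 0 := by omega
      simp [zero_zero]
    · rw [eq_empty_of_length_lt (by omega)]
      simp
  | succ n ih =>
    rcases hh.eq_or_lt with rfl | hh
    · obtain rfl : n = 2 * m := by omega
      rw [eq_empty_of_neg (by norm_num), Nat.choose_symm_half]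
      simp
    · obtain ⟨m, rfl⟩ : ∃ m', m = m' + 1 := ⟨m - 1, by omega⟩
      rw [ncard_succ (by omega), Nat.cast_add, ih m (h - 1) (by omega) (by omega),
        ih (m + 1) (h + 1) (by omega) (by omega), Nat.choose_succ_succ' n m,
        Nat.choose_succ_succ' n (m + 1)]
      push_cast
      ring

end nonnegPaths

theorem ballot_count_general (M p : ℕ) :
    Set.ncard {ε : Fin (2 * M) → ℤ |
        (∀ i, ε i = 1 ∨ ε i = -1) ∧
        (∀ k : ℕ, 1 ≤ k → k ≤ 2 * M →
          0 ≤ ∑ i ∈ Finset.univ.filter (fun i : Fin (2 * M) => (i : ℕ) < k), ε i) ∧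
        (∑ i, ε i) = 2 * (p : ℤ)} =
      Nat.choose (2 * M) (M + p) - Nat.choose (2 * M) (M + p + 1) := by
  have hcount := nonnegPaths.ncard_eq_choose_sub_choose (2 * M) (M + p) (2 * p)
    (by push_cast; ring) (by omega)
  change (nonnegPaths (2 * M) (2 * p)).ncard = _
  -- the integer identity shows the difference is nonnegative, so `ℕ`-subtraction is exact
  omega

/-- Ballot-type count: the number of `±1`-sequences of length `2M` with all partial sums
nonnegative and total sum `2p` is `binom(2M, M+p) − binom(2M, M+p+1)`. -/
theorem ballot_count (M p : ℕ) (hp : p ≤ M) :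
    Set.ncard {ε : Fin (2 * M) → ℤ |
        (∀ i, ε i = 1 ∨ ε i = -1) ∧
        (∀ k : ℕ, 1 ≤ k → k ≤ 2 * M →
          0 ≤ ∑ i ∈ Finset.univ.filter (fun i : Fin (2 * M) => (i : ℕ) < k), ε i) ∧
        (∑ i, ε i) = 2 * (p : ℤ)} =
      Nat.choose (2 * M) (M + p) - Nat.choose (2 * M) (M + p + 1) :=
  ballot_count_general M p
end

section
/- Let M ≥ 0 and 0 ≤ p ≤ M be integers. The number of Dyck words of semilength 2M (i.e., lists of 2M up-steps +1 and 2M down-steps −1 with all partial sums nonnegative) whose height after the first 2M steps equals 2p is (binom(2M, M+p) − binom(2M, M+p+1))^2. -/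
/-!
Cutting a Dyck path of length `4M` in the middle gives a nonnegative `±1` path of length `2M`
from `0` to `2p`, followed by a path which, read backwards with its steps negated, is again
such a path; conversely any two such paths glue to a Dyck path with middle height `2p`. So the
count is the square of the number of nonnegative paths of length `n = 2M` ending at
`2u - n` (`u = M + p`). Removing the last step and using Pascal's rule shows by induction on `n`
that this number is the ballot number `C(n, u) - C(n, u + 1)`.
-/

open Finset

theorem Nat.choose_le_choose_succ {n k : ℕ} (h : 2 * k + 1 ≤ n) :
    n.choose k ≤ n.choose (k + 1) := by
  refine Nat.le_of_mul_le_mul_right ?_ k.succ_pos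
  rw [Nat.choose_succ_right_eq]
  exact Nat.mul_le_mul_left _ (by omega)

theorem Nat.choose_succ_le_choose {n k : ℕ} (h : n ≤ 2 * k + 1) :
    n.choose (k + 1) ≤ n.choose k := by
  refine Nat.le_of_mul_le_mul_right ?_ k.succ_pos
  rw [Nat.choose_succ_right_eq]
  exact Nat.mul_le_mul_left _ (by omega)

namespace LatticePath

variable {n m m' : ℕ}

def height (ε : Fin n → ℤ) (k : ℕ) : ℤ :=
  ∑ i ∈ univ.filter (fun i : Fin n => (i : ℕ) < k), ε i

@[simp] lemma height_zero (ε : Fin n → ℤ) : height ε 0 = 0 := by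
  simp [height]

lemma height_of_le (ε : Fin n → ℤ) {k : ℕ} (hk : n ≤ k) : height ε k = ∑ i, ε i := by
  rw [height, filter_true_of_mem fun i _ => i.is_lt.trans_le hk]

lemma height_eq_of_le (ε : Fin n → ℤ) {k : ℕ} (hk : n ≤ k) :
    height ε k = height ε n := by
  rw [height_of_le ε hk, height_of_le ε le_rfl]

lemma height_neg (ε : Fin n → ℤ) (k : ℕ) : height (-ε) k = -height ε k := by
  simp [height]

lemma height_snoc (ε : Fin n → ℤ) (s : ℤ) (k : ℕ) :
    height (Fin.snoc ε s : Fin (n + 1) → ℤ) k = height ε k + if n < k then s else 0 := by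
  simp [height, sum_filter, Fin.sum_univ_castSucc]

lemma height_append (f : Fin m → ℤ) (g : Fin m' → ℤ) (k : ℕ) :
    height (Fin.append f g) k = height f k + height g (k - m) := by
  simp [height, sum_filter, Fin.sum_univ_add, Nat.lt_sub_iff_add_lt, add_comm]

lemma height_comp_rev (g : Fin n → ℤ) (k : ℕ) :
    height (g ∘ Fin.rev) k = height g n - height g (n - k) := by
  rw [height_of_le g le_rfl, eq_sub_iff_add_eq]
  calc height (g ∘ Fin.rev) k + height g (n - k)
      = ∑ i : Fin n, ((if (i : ℕ) < k then g i.rev else 0) +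
          if (i.rev : ℕ) < n - k then g i.rev else 0) := by
        simp only [height, sum_filter, sum_add_distrib, Function.comp_apply]
        congr 1
        exact (Equiv.sum_comp Fin.revPerm fun j => if (j : ℕ) < n - k then g j else 0).symm
    _ = ∑ i : Fin n, g i.rev := sum_congr rfl fun i _ => by
        have := i.is_lt
        split_ifs <;> simp_all [Fin.val_rev] <;> omega
    _ = ∑ i, g i := Equiv.sum_comp Fin.revPerm g

def ballotPaths (n : ℕ) (h : ℤ) : Finset (Fin n → ℤ) :=
  {ε ∈ Fintype.piFinset fun _ => {1, -1} | (∀ k ≤ n, 0 ≤ height ε k) ∧ height ε n = h}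

lemma mem_ballotPaths {h : ℤ} {ε : Fin n → ℤ} :
    ε ∈ ballotPaths n h ↔
      (∀ i, ε i = 1 ∨ ε i = -1) ∧ (∀ k ≤ n, 0 ≤ height ε k) ∧ height ε n = h := by
  simp [ballotPaths]

lemma ballotPaths_of_neg {h : ℤ} (hh : h < 0) : ballotPaths n h = ∅ := by
  ext ε
  simp only [mem_ballotPaths, notMem_empty, iff_false]
  rintro ⟨-, hnonneg, rfl⟩
  exact hh.not_ge (hnonneg n le_rfl)

lemma card_ballotPaths_zero (h : ℤ) : #(ballotPaths 0 h) = if h = 0 then 1 else 0 := by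
  simp [ballotPaths, eq_comm, apply_ite card]

lemma snoc_mem_ballotPaths {h : ℤ} (hh : 0 ≤ h) (ε : Fin n → ℤ) (s : ℤ) :
    (Fin.snoc ε s : Fin (n + 1) → ℤ) ∈ ballotPaths (n + 1) h ↔
      (s = 1 ∨ s = -1) ∧ ε ∈ ballotPaths n (h - s) := by
  simp only [mem_ballotPaths, Fin.forall_fin_succ', Fin.snoc_castSucc, Fin.snoc_last,
    height_snoc, lt_add_one, if_true]
  rw [height_eq_of_le ε (Nat.le_succ n)]
  constructor
  · rintro ⟨⟨hε, hs⟩, hnonneg, hend⟩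
    refine ⟨hs, hε, fun k hk => ?_, by linarith⟩
    simpa [hk.not_gt] using hnonneg k (by omega)
  · rintro ⟨hs, hε, hnonneg, hend⟩
    refine ⟨⟨hε, hs⟩, fun k hk => ?_, by linarith⟩
    split_ifs with hnk
    · rw [height_eq_of_le ε hnk.le]
      linarith
    · simpa using hnonneg k (by omega)

lemma card_ballotPaths_succ {h : ℤ} (hh : 0 ≤ h) :
    #(ballotPaths (n + 1) h) = #(ballotPaths n (h - 1)) + #(ballotPaths n (h + 1)) := by
  have hdisj : Disjoint ({1} ×ˢ ballotPaths n (h - 1)) ({-1} ×ˢ ballotPaths n (h + 1)) := by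
    simp [disjoint_left]
  calc #(ballotPaths (n + 1) h)
      = #({1} ×ˢ ballotPaths n (h - 1) ∪ {-1} ×ˢ ballotPaths n (h + 1)) := by
        refine (card_equiv (Fin.snocEquiv fun _ => ℤ) fun ⟨s, ε⟩ => ?_).symm
        change _ ↔ (Fin.snoc ε s : Fin (n + 1) → ℤ) ∈ _
        rw [snoc_mem_ballotPaths hh]
        simp only [mem_union, mem_product, mem_singleton, or_and_right]
        exact or_congr (and_congr_right fun hs => by rw [hs])
          (and_congr_right fun hs => by rw [hs, sub_neg_eq_add])
    _ = #(ballotPaths n (h - 1)) + #(ballotPaths n (h + 1)) := by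
        rw [card_union_of_disjoint hdisj, card_product, card_product, card_singleton,
          card_singleton, one_mul, one_mul]

theorem card_ballotPaths (n u : ℕ) :
    #(ballotPaths n (2 * u - n)) = n.choose u - n.choose (u + 1) := by
  induction n generalizing u with
  | zero => rcases u with _ | u <;> simp [card_ballotPaths_zero]; omega
  | succ n ih =>
    rcases lt_or_ge (2 * u) (n + 1) with hlt | hge
    · rw [ballotPaths_of_neg (by push_cast; omega), card_empty,
        Nat.sub_eq_zero_of_le (Nat.choose_le_choose_succ hlt)]
    obtain ⟨v, rfl⟩ : ∃ v, u = v + 1 := ⟨u - 1, by omega⟩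
    have hdown : (2 * (v + 1 : ℕ) - (n + 1 : ℕ) : ℤ) - 1 = 2 * v - n := by push_cast; ring
    have hup : (2 * (v + 1 : ℕ) - (n + 1 : ℕ) : ℤ) + 1 = 2 * (v + 1 : ℕ) - n := by
      push_cast; ring
    rw [card_ballotPaths_succ (by push_cast; omega), hdown, hup, ih, ih,
      Nat.choose_succ_succ', Nat.choose_succ_succ']
    have := Nat.choose_succ_le_choose (n := n) (k := v) (by omega)
    have := Nat.choose_succ_le_choose (n := n) (k := v + 1) (by omega)
    omega

def dyckPathsThrough (n m : ℕ) (h : ℤ) : Set (Fin n → ℤ) :=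
  {ε | (∀ i, ε i = 1 ∨ ε i = -1) ∧ (∀ k ≤ n, 0 ≤ height ε k) ∧ height ε n = 0 ∧
    height ε m = h}

def glue (m m' : ℕ) : (Fin m → ℤ) × (Fin m' → ℤ) ≃ (Fin (m + m') → ℤ) :=
  ((Equiv.refl _).prodCongr (Fin.revPerm.arrowCongr (Equiv.neg ℤ))).trans (Fin.appendEquiv m m')

lemma glue_apply (f : Fin m → ℤ) (g : Fin m' → ℤ) :
    glue m m' (f, g) = Fin.append f (-(g ∘ Fin.rev)) :=
  rfl

lemma height_glue (f : Fin m → ℤ) (g : Fin m' → ℤ) (k : ℕ) :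
    height (glue m m' (f, g)) k = height f k + height g (m' - (k - m)) - height g m' := by
  rw [glue_apply, height_append, height_neg, height_comp_rev]
  ring

lemma glue_mem_dyckPathsThrough {h : ℤ} (f : Fin m → ℤ) (g : Fin m' → ℤ) :
    glue m m' (f, g) ∈ dyckPathsThrough (m + m') m h ↔
      f ∈ ballotPaths m h ∧ g ∈ ballotPaths m' h := by
  have hsteps :
      (∀ i, -g (Fin.rev i) = 1 ∨ -g (Fin.rev i) = -1) ↔ ∀ i, g i = 1 ∨ g i = -1 := by
    rw [Fin.rev_surjective.forall]
    simp only [Fin.rev_rev, neg_eq_iff_eq_neg, neg_neg, or_comm]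
  simp only [dyckPathsThrough, Set.mem_ofPred_eq, mem_ballotPaths, Fin.forall_fin_add, glue_apply,
    Fin.append_left, Fin.append_right, Pi.neg_apply, Function.comp_apply, hsteps]
  simp only [← glue_apply, height_glue, tsub_self, Nat.sub_zero, add_tsub_cancel_left,
    height_zero]
  rw [height_eq_of_le f (Nat.le_add_right m m')]
  constructor
  · rintro ⟨⟨hf, hg⟩, hnonneg, htotal, hmiddle⟩
    have hfm : height f m = h := by linarith
    have hgm : height g m' = h := by linarith
    refine ⟨⟨hf, fun k hk => ?_, hfm⟩, hg, fun k hk => ?_, hgm⟩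
    · have := hnonneg k (by omega)
      rwa [show m' - (k - m) = m' by omega, add_sub_cancel_right] at this
    -- after `m + (m' - k)` steps the glued path is at the height of `g` after `k` steps
    · have := hnonneg (m + (m' - k)) (by omega)
      rwa [height_eq_of_le f (by omega), show m' - (m + (m' - k) - m) = k by omega, hfm, hgm,
        add_sub_cancel_left] at this
  · rintro ⟨⟨hf, hfnonneg, hfm⟩, hg, hgnonneg, hgm⟩
    refine ⟨⟨hf, hg⟩, fun k hk => ?_, by linarith, by linarith⟩
    rcases le_total k m with hkm | hmk
    · rw [show m' - (k - m) = m' by omega]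
      linarith [hfnonneg k hkm]
    · rw [height_eq_of_le f hmk]
      linarith [hgnonneg (m' - (k - m)) (by omega)]

theorem ncard_dyckPathsThrough (hn : m + m' = n) (h : ℤ) :
    (dyckPathsThrough n m h).ncard = #(ballotPaths m h) * #(ballotPaths m' h) := by
  subst hn
  rw [← Set.ncard_preimage_of_injective_subset_range (glue m m').injective (by simp),
    ← card_product, ← Set.ncard_coe_finset]
  congr 1
  ext ⟨f, g⟩
  simp [glue_mem_dyckPathsThrough]

end LatticePath

open LatticePath

theorem dyck_middle_height_count_general (M p : ℕ) :
    Set.ncard {ε : Fin (4 * M) → ℤ |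
        (∀ i, ε i = 1 ∨ ε i = -1) ∧
        (∀ k : ℕ, 1 ≤ k → k ≤ 4 * M →
          0 ≤ ∑ i ∈ Finset.univ.filter (fun i : Fin (4 * M) => (i : ℕ) < k), ε i) ∧
        (∑ i, ε i) = 0 ∧
        (∑ i ∈ Finset.univ.filter (fun i : Fin (4 * M) => (i : ℕ) < 2 * M), ε i)
          = 2 * (p : ℤ)} =
      (Nat.choose (2 * M) (M + p) - Nat.choose (2 * M) (M + p + 1)) ^ 2 := by
  have hmiddle : (2 * (M + p : ℕ) - (2 * M : ℕ) : ℤ) = 2 * p := by push_cast; ring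
  calc Set.ncard _
      = (dyckPathsThrough (4 * M) (2 * M) (2 * (M + p : ℕ) - (2 * M : ℕ))).ncard := by
        congr 1
        ext ε
        rw [hmiddle, dyckPathsThrough, Set.mem_ofPred_eq, Set.mem_ofPred_eq,
          height_of_le ε le_rfl]
        refine and_congr_right fun _ => and_congr ?_ Iff.rfl
        refine ⟨fun hpos k hk => ?_, fun hnonneg k _ => hnonneg k⟩
        rcases k.eq_zero_or_pos with rfl | hk0
        · exact (height_zero ε).ge
        · exact hpos k hk0 hk
    _ = _ := by rw [ncard_dyckPathsThrough (m' := 2 * M) (by ring), card_ballotPaths, sq]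

/-- The number of Dyck words of semilength `2M` (i.e. `±1`-sequences of length `4M` with
`2M` up-steps and `2M` down-steps, equivalently total sum `0`, and all partial sums
nonnegative) whose height after the first `2M` steps equals `2p` is
`(binom(2M, M+p) − binom(2M, M+p+1))^2`. -/
theorem dyck_middle_height_count (M p : ℕ) (hp : p ≤ M) :
    Set.ncard {ε : Fin (4 * M) → ℤ |
        (∀ i, ε i = 1 ∨ ε i = -1) ∧
        (∀ k : ℕ, 1 ≤ k → k ≤ 4 * M →
          0 ≤ ∑ i ∈ Finset.univ.filter (fun i : Fin (4 * M) => (i : ℕ) < k), ε i) ∧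
        (∑ i, ε i) = 0 ∧
        (∑ i ∈ Finset.univ.filter (fun i : Fin (4 * M) => (i : ℕ) < 2 * M), ε i)
          = 2 * (p : ℤ)} =
      (Nat.choose (2 * M) (M + p) - Nat.choose (2 * M) (M + p + 1)) ^ 2 :=
  dyck_middle_height_count_general M p
end

section
/- For every integer M ≥ 0, Σ_{p=0}^{M} (binom(2M, M+p) − binom(2M, M+p+1))^2 = catalan(2M), where catalan(n) = (1/(n+1))·binom(2n, n) is the n-th Catalan number. -/
/-!
Write `d j = C(n, j) - C(n, j + 1)`. Expanding the squares, Vandermonde's identity gives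
`∑_{j ≤ n} d j ^ 2 = 2 (C(2n, n) - C(2n, n + 1)) - 1`. For `n = 2M` the symmetry of binomial
coefficients gives `d (M - 1 - j) = -d (M + j)`, so the full sum is twice the sum over `j ≥ M`
minus the last term `d (2M) ^ 2 = 1`. Finally `C(2n, n) - C(2n, n + 1) = C(2n, n) / (n + 1)`.
-/

open Finset

theorem Nat.sum_range_choose_mul_choose_succ (n : ℕ) :
    ∑ j ∈ range (n + 1), n.choose j * n.choose (j + 1) = (2 * n).choose (n + 1) := by
  rw [two_mul, Nat.add_choose_eq, Nat.sum_antidiagonal_eq_sum_range_succ_mk,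
    sum_range_succ' _ (n + 1), Nat.sub_zero, Nat.choose_succ_self, mul_zero, add_zero]
  refine sum_congr rfl fun j hj => ?_
  rw [mul_comm, Nat.succ_sub_succ, Nat.choose_symm (mem_range_succ_iff.mp hj)]

theorem Nat.sum_range_choose_succ_sq (n : ℕ) :
    ∑ j ∈ range (n + 1), n.choose (j + 1) ^ 2 + 1 = (2 * n).choose n := by
  have h := (sum_range_succ (fun j => n.choose j ^ 2) (n + 1)).symm.trans
    (sum_range_succ' (fun j => n.choose j ^ 2) (n + 1))
  simp_all [Nat.sum_range_choose_sq]

theorem sum_range_sq_choose_sub_choose_succ {R : Type*} [CommRing R] (n : ℕ) :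
    ∑ j ∈ range (n + 1), ((n.choose j : R) - n.choose (j + 1)) ^ 2 =
      2 * ((2 * n).choose n - (2 * n).choose (n + 1)) - 1 := by
  have hsq : ∑ j ∈ range (n + 1), (n.choose j : R) ^ 2 = (2 * n).choose n := by
    exact_mod_cast congrArg (Nat.cast : ℕ → R) (Nat.sum_range_choose_sq n)
  have hsq_succ : ∑ j ∈ range (n + 1), (n.choose (j + 1) : R) ^ 2 = (2 * n).choose n - 1 := by
    rw [eq_sub_iff_add_eq]
    exact_mod_cast congrArg (Nat.cast : ℕ → R) (Nat.sum_range_choose_succ_sq n)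
  have hmul : ∑ j ∈ range (n + 1), (n.choose j : R) * n.choose (j + 1) =
      (2 * n).choose (n + 1) := by
    exact_mod_cast congrArg (Nat.cast : ℕ → R) (Nat.sum_range_choose_mul_choose_succ n)
  calc _ = ∑ j ∈ range (n + 1), ((n.choose j : R) ^ 2 + (n.choose (j + 1) : R) ^ 2 -
          2 * ((n.choose j : R) * n.choose (j + 1))) :=
        sum_congr rfl fun _ _ => by ring
    _ = _ := by
      rw [sum_sub_distrib, sum_add_distrib, ← mul_sum, hsq, hsq_succ, hmul]
      ring

theorem sum_range_two_mul_of_symm {β : Type*} [AddCommMonoid β] {M : ℕ} (g : ℕ → β)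
    (hg : ∀ j < M, g (M - 1 - j) = g (M + j)) :
    ∑ j ∈ range (2 * M), g j = 2 • ∑ p ∈ range M, g (M + p) := by
  rw [two_mul, sum_range_add, two_nsmul, ← sum_range_reflect]
  congr 1
  exact sum_congr rfl fun j hj => hg j (mem_range.mp hj)

theorem choose_two_mul_sub_choose_succ_reflect {R : Type*} [CommRing R] {M j : ℕ} (hj : j < M) :
    ((2 * M).choose (M - 1 - j) : R) - (2 * M).choose (M - 1 - j + 1) =
      -((2 * M).choose (M + j) - (2 * M).choose (M + j + 1)) := by
  rw [Nat.choose_symm_of_eq_add (show 2 * M = M - 1 - j + (M + j + 1) by omega),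
    Nat.choose_symm_of_eq_add (show 2 * M = M - 1 - j + 1 + (M + j) by omega)]
  ring

theorem sum_range_sq_choose_sub_choose_succ_upper_half (M : ℕ) :
    ∑ p ∈ range (M + 1), (((2 * M).choose (M + p) : ℤ) - (2 * M).choose (M + p + 1)) ^ 2 =
      (2 * (2 * M)).choose (2 * M) - (2 * (2 * M)).choose (2 * M + 1) := by
  have hfull := sum_range_sq_choose_sub_choose_succ (R := ℤ) (2 * M)
  rw [sum_range_succ, sum_range_two_mul_of_symm _ fun j hj => by
    simp only [choose_two_mul_sub_choose_succ_reflect hj, neg_sq]] at hfull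
  rw [sum_range_succ, ← two_mul]
  simp only [Nat.choose_self, Nat.choose_succ_self, two_nsmul, Nat.cast_one, Nat.cast_zero]
    at hfull ⊢
  linarith

theorem choose_two_mul_sub_choose_succ {K : Type*} [Field K] [CharZero K] (n : ℕ) :
    ((2 * n).choose n : K) - (2 * n).choose (n + 1) = 1 / (n + 1) * (2 * n).choose n := by
  have h := Nat.choose_succ_right_eq (2 * n) n
  rw [show 2 * n - n = n by omega] at h
  have h' : ((2 * n).choose (n + 1) : K) * (n + 1) = (2 * n).choose n * n := by exact_mod_cast h
  rw [one_div, ← div_eq_inv_mul, eq_div_iff (Nat.cast_add_one_ne_zero n)]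
  linear_combination -h'

/-- `Σ_{p=0}^{M} (binom(2M, M+p) − binom(2M, M+p+1))^2 = catalan(2M)`, where
`catalan(n) = (1/(n+1))·binom(2n, n)`. -/
theorem sum_sq_ballot_eq_catalan (M : ℕ) :
    ∑ p ∈ Finset.range (M + 1),
        ((Nat.choose (2 * M) (M + p) : ℚ) - (Nat.choose (2 * M) (M + p + 1) : ℚ)) ^ 2 =
      (1 / ((2 * M : ℚ) + 1)) * (Nat.choose (2 * (2 * M)) (2 * M) : ℚ) := by
  have h := congrArg (Int.cast : ℤ → ℚ) (sum_range_sq_choose_sub_choose_succ_upper_half M)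
  push_cast at h
  rw [h, choose_two_mul_sub_choose_succ]
  push_cast
  ring
end

section
/- For every integer M ≥ 0, Σ_{p=0}^{M} (2p+1)·(binom(2M, M+p) − binom(2M, M+p+1))^2 = binom(2M, M)^2. -/
/-!
The sum telescopes: with `Φ p = (2p² + M) · C(2M, M+p)²`, each summand times `M` equals
`Φ p - Φ (p+1)`, a quadratic identity in two consecutive binomial coefficients that follows from
their ratio `C(2M, M+p+1) · (M+p+1) = C(2M, M+p) · (M-p)`. Since `Φ 0 = M · C(2M, M)²` and
`Φ (M+1) = 0`, the claim follows after cancelling `M`.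
-/

open Finset

/-- Holds for all `k` because both sides vanish once `k ≥ n`. -/
theorem Nat.cast_choose_succ_right_mul {R : Type*} [CommRing R] (n k : ℕ) :
    (n.choose (k + 1) : R) * (k + 1) = n.choose k * (n - k) := by
  rcases le_or_gt k n with hkn | hnk
  · have h := congrArg (Nat.cast (R := R)) (Nat.choose_succ_right_eq n k)
    push_cast [Nat.cast_sub hkn] at h
    exact h
  · simp [Nat.choose_eq_zero_of_lt hnk, Nat.choose_eq_zero_of_lt (Nat.lt_succ_of_lt hnk)]

def ballotPotential (R : Type*) [CommRing R] (M p : ℕ) : R :=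
  (2 * (p : R) ^ 2 + M) * (Nat.choose (2 * M) (M + p) : R) ^ 2

theorem mul_weighted_sq_ballot_eq_sub {R : Type*} [CommRing R] (M p : ℕ) :
    (M : R) * ((2 * (p : R) + 1) *
        ((Nat.choose (2 * M) (M + p) : R) - (Nat.choose (2 * M) (M + p + 1) : R)) ^ 2) =
      ballotPotential R M p - ballotPotential R M (p + 1) := by
  have ratio := Nat.cast_choose_succ_right_mul (R := R) (2 * M) (M + p)
  simp only [ballotPotential, ← add_assoc]
  push_cast at ratio ⊢
  -- both sides are quadratic forms in the two coefficients that agree on the line cut out by `ratio`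
  linear_combination
    (2 * ((p : R) + 1) * (Nat.choose (2 * M) (M + p + 1) : R) -
      2 * (p : R) * (Nat.choose (2 * M) (M + p) : R)) * ratio

theorem ballotPotential_zero {R : Type*} [CommRing R] (M : ℕ) :
    ballotPotential R M 0 = M * (Nat.choose (2 * M) M : R) ^ 2 := by
  simp [ballotPotential]

theorem ballotPotential_succ_self {R : Type*} [CommRing R] (M : ℕ) :
    ballotPotential R M (M + 1) = 0 := by
  simp [ballotPotential, Nat.choose_eq_zero_of_lt (by omega : 2 * M < M + (M + 1))]

/-- `Σ_{p=0}^{M} (2p+1)·(binom(2M, M+p) − binom(2M, M+p+1))^2 = binom(2M, M)^2`. -/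
theorem sum_weighted_sq_ballot (M : ℕ) :
    ∑ p ∈ Finset.range (M + 1),
        (2 * (p : ℚ) + 1) *
          ((Nat.choose (2 * M) (M + p) : ℚ) - (Nat.choose (2 * M) (M + p + 1) : ℚ)) ^ 2 =
      (Nat.choose (2 * M) M : ℚ) ^ 2 := by
  rcases Nat.eq_zero_or_pos M with rfl | hM
  · simp
  refine mul_left_cancel₀ (Nat.cast_ne_zero.mpr hM.ne' : (M : ℚ) ≠ 0) ?_
  rw [mul_sum, sum_congr rfl fun p _ => mul_weighted_sq_ballot_eq_sub M p, sum_range_sub',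
    ballotPotential_succ_self, ballotPotential_zero, sub_zero]
end

section
/- Let M ≥ 1 and 0 ≤ p ≤ M be integers. Then, in ℚ, ((2p+1)/(M+p+1))^2 · binom(2M, M+p)^2 · (2p+1) = ((M+2p^2)/M)·binom(2M, M+p)^2 − ((M+2(p+1)^2)/M)·binom(2M, M+p+1)^2. -/
/-- The telescoping identity
`((2p+1)/(M+p+1))^2 · binom(2M, M+p)^2 · (2p+1)
  = ((M+2p^2)/M)·binom(2M, M+p)^2 − ((M+2(p+1)^2)/M)·binom(2M, M+p+1)^2` in `ℚ`. -/
theorem telescoping_identity (M p : ℕ) (hM : 1 ≤ M) (hp : p ≤ M) :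
    ((2 * (p : ℚ) + 1) / ((M : ℚ) + p + 1)) ^ 2 * (Nat.choose (2 * M) (M + p) : ℚ) ^ 2 *
        (2 * (p : ℚ) + 1) =
      (((M : ℚ) + 2 * (p : ℚ) ^ 2) / (M : ℚ)) * (Nat.choose (2 * M) (M + p) : ℚ) ^ 2 -
        (((M : ℚ) + 2 * ((p : ℚ) + 1) ^ 2) / (M : ℚ)) *
          (Nat.choose (2 * M) (M + p + 1) : ℚ) ^ 2 := by
  have hkey : Nat.choose (2 * M) (M + p + 1) * (M + p + 1) =
      Nat.choose (2 * M) (M + p) * (M - p) := by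
    have := Nat.choose_succ_right_eq (2 * M) (M + p)
    have h2 : 2 * M - (M + p) = M - p := by omega
    simpa [h2] using this
  have hQ : (Nat.choose (2 * M) (M + p + 1) : ℚ) * ((M : ℚ) + p + 1) =
      (Nat.choose (2 * M) (M + p) : ℚ) * ((M : ℚ) - p) := by
    have := congrArg (Nat.cast : ℕ → ℚ) hkey
    push_cast [Nat.cast_sub hp] at this
    linarith [this]
  have hMpos : (M : ℚ) ≠ 0 := by positivity
  have hden : (M : ℚ) + p + 1 ≠ 0 := by positivity
  have hD : (Nat.choose (2 * M) (M + p + 1) : ℚ) =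
      (Nat.choose (2 * M) (M + p) : ℚ) * ((M : ℚ) - p) / ((M : ℚ) + p + 1) := by
    field_simp
    linarith [hQ]
  rw [hD]
  field_simp
  ring
end

section
/- Define, for integers M ≥ 1, the real number k_{2M−1} = 2·binom(2M, M)·binom(2M−2, M−1) / catalan(2M−1) − 2, where catalan(n) = (1/(n+1))·binom(2n, n). Then the sequence k_{2M−1}/√(2M−1) converges to 4/√π as M → ∞. -/
/-!
Stirling's formula gives `binom(2n, n) ~ 4ⁿ / √(πn)`, i.e. `binom(2n, n) · √n / 4ⁿ → 1 / √π`.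
In `k_{2M−1} + 2 = 4M · binom(2M, M) · binom(2M−2, M−1) / binom(4M−2, 2M−1)` the powers of four
cancel, leaving `(k_{2M−1} + 2) / √(2M−1) ≈ 4M / (√π · √(M(M−1))) → 4 / √π`.
-/

open Filter Real

noncomputable def scaledCentralBinom (n : ℕ) : ℝ := n.centralBinom * √n / 4 ^ n

theorem scaledCentralBinom_eq_stirlingSeq {n : ℕ} (hn : n ≠ 0) :
    scaledCentralBinom n = Stirling.stirlingSeq (2 * n) / Stirling.stirlingSeq n ^ 2 := by
  have hfact : ((2 * n).factorial : ℝ) = n.centralBinom * (n.factorial : ℝ) ^ 2 := by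
    rw [Nat.centralBinom_eq_two_mul_choose, two_mul, ← Nat.add_choose_mul_factorial_mul_factorial]
    push_cast; ring
  have hsqrt : √(2 * ((2 * n : ℕ) : ℝ)) = 2 * √n := by
    push_cast
    rw [← mul_assoc, show (2 : ℝ) * 2 = 2 ^ 2 by norm_num,
      sqrt_mul (by positivity), sqrt_sq zero_le_two]
  have hfour : (4 : ℝ) ^ n = 2 ^ (2 * n) := by rw [pow_mul]; norm_num
  rw [scaledCentralBinom, hfour, Stirling.stirlingSeq, Stirling.stirlingSeq, hfact, hsqrt]
  simp_rw [div_pow, mul_pow]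
  rw [sq_sqrt (by positivity)]
  simp [field, ← exp_nsmul]
  ring_nf

theorem tendsto_scaledCentralBinom :
    Tendsto scaledCentralBinom atTop (nhds (1 / √π)) := by
  have hπ : √π ≠ 0 := by positivity
  have h := (Stirling.tendsto_stirlingSeq_sqrt_pi.comp
    (tendsto_id.const_mul_atTop' two_pos)).div (Stirling.tendsto_stirlingSeq_sqrt_pi.pow 2)
    (pow_ne_zero 2 hπ)
  rw [sq, div_mul_cancel_right₀ hπ, ← one_div] at h
  refine h.congr' ?_
  filter_upwards [eventually_ne_atTop 0] with n hn
  exact (scaledCentralBinom_eq_stirlingSeq hn).symm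

theorem scaledCentralBinom_pos {n : ℕ} (hn : n ≠ 0) : 0 < scaledCentralBinom n := by
  have : (0 : ℝ) < n := by positivity
  rw [scaledCentralBinom]
  exact div_pos (mul_pos (by exact_mod_cast n.centralBinom_pos) (sqrt_pos.2 this)) (by positivity)

theorem centralBinom_eq_four_pow_div_sqrt_mul {n : ℕ} (hn : n ≠ 0) :
    (n.centralBinom : ℝ) = 4 ^ n / √n * scaledCentralBinom n := by
  have : √(n : ℝ) ≠ 0 := by positivity
  rw [scaledCentralBinom]
  field_simp

theorem two_mul_choose_mul_choose_div_catalan_eq {M : ℕ} (hM : 1 ≤ M) :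
    2 * ((2 * M).choose M : ℝ) * ((2 * M - 2).choose (M - 1) : ℝ) /
        ((1 / (((2 * M - 1 : ℕ) : ℝ) + 1)) * ((2 * (2 * M - 1)).choose (2 * M - 1) : ℝ)) =
      4 * M * M.centralBinom * (M - 1).centralBinom / (2 * M - 1).centralBinom := by
  have h2 : 2 * M - 2 = 2 * (M - 1) := by omega
  have hcast : ((2 * M - 1 : ℕ) : ℝ) + 1 = 2 * M := by
    rw [Nat.cast_sub (by omega)]; push_cast; ring
  have : ((2 * M - 1).centralBinom : ℝ) ≠ 0 := by exact_mod_cast Nat.centralBinom_ne_zero _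
  rw [h2, hcast, ← Nat.centralBinom_eq_two_mul_choose, ← Nat.centralBinom_eq_two_mul_choose,
    ← Nat.centralBinom_eq_two_mul_choose]
  field_simp
  ring

theorem centralBinom_ratio_div_sqrt_eq {M : ℕ} (hM : 2 ≤ M) :
    4 * M * M.centralBinom * (M - 1).centralBinom / (2 * M - 1).centralBinom / √(2 * M - 1) =
      4 * scaledCentralBinom M * scaledCentralBinom (M - 1) / scaledCentralBinom (2 * M - 1) *
        √(M / (M - 1)) := by
  have h1 : ((M - 1 : ℕ) : ℝ) = M - 1 := by rw [Nat.cast_sub (by omega), Nat.cast_one]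
  have h2 : ((2 * M - 1 : ℕ) : ℝ) = 2 * M - 1 := by rw [Nat.cast_sub (by omega)]; push_cast; ring
  have hpow : (4 : ℝ) ^ (2 * M - 1) = 4 ^ M * 4 ^ (M - 1) := by rw [← pow_add]; congr 1; omega
  have hM' : (2 : ℝ) ≤ M := by exact_mod_cast hM
  rw [centralBinom_eq_four_pow_div_sqrt_mul (by omega : M ≠ 0),
    centralBinom_eq_four_pow_div_sqrt_mul (by omega : M - 1 ≠ 0),
    centralBinom_eq_four_pow_div_sqrt_mul (by omega : 2 * M - 1 ≠ 0), h1, h2, hpow,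
    sqrt_div (by positivity)]
  have : scaledCentralBinom (2 * M - 1) ≠ 0 := (scaledCentralBinom_pos (by omega)).ne'
  have : 0 < √((M : ℝ) - 1) := sqrt_pos.2 (by linarith)
  field_simp
  rw [sq_sqrt (by positivity), mul_div_cancel_right₀ _ (sqrt_pos.2 (by linarith)).ne']

/-- With `k_{2M−1} = 2·binom(2M, M)·binom(2M−2, M−1) / catalan(2M−1) − 2` (where
`catalan(n) = (1/(n+1))·binom(2n, n)`), the sequence `k_{2M−1}/√(2M−1)` converges to `4/√π`. -/
theorem contact_asymptotics_odd (k : ℕ → ℝ)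
    (hk : ∀ M : ℕ, 1 ≤ M →
      k M = 2 * (Nat.choose (2 * M) M : ℝ) * (Nat.choose (2 * M - 2) (M - 1) : ℝ) /
          ((1 / (((2 * M - 1 : ℕ) : ℝ) + 1)) *
            (Nat.choose (2 * (2 * M - 1)) (2 * M - 1) : ℝ)) - 2) :
    Tendsto (fun M : ℕ => k M / Real.sqrt (2 * (M : ℝ) - 1)) atTop
      (nhds (4 / Real.sqrt Real.pi)) := by
  have hs := tendsto_scaledCentralBinom
  have hsqrt : Tendsto (fun M : ℕ => √((M : ℝ) / (M - 1))) atTop (nhds 1) := by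
    simpa [sub_eq_add_neg] using (tendsto_natCast_div_add_atTop (-1 : ℝ)).sqrt
  have hlin : Tendsto (fun M : ℕ => 2 * (M : ℝ) - 1) atTop atTop :=
    tendsto_atTop_add_const_right _ (-1)
      (tendsto_natCast_atTop_atTop.const_mul_atTop two_pos)
  have hvanish : Tendsto (fun M : ℕ => 2 / √(2 * (M : ℝ) - 1)) atTop (nhds 0) :=
    tendsto_const_nhds.div_atTop (tendsto_sqrt_atTop.comp hlin)
  have hlim := ((((hs.const_mul 4).mul (hs.comp (tendsto_sub_atTop_nat 1))).div
    (hs.comp ((tendsto_sub_atTop_nat 1).comp (tendsto_id.const_mul_atTop' two_pos)))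
    (by positivity)).mul hsqrt).sub hvanish
  convert hlim.congr' ?_ using 2
  · simp [field]
  filter_upwards [eventually_ge_atTop 2] with M hM
  rw [hk M (by omega), sub_div, two_mul_choose_mul_choose_div_catalan_eq (by omega),
    centralBinom_ratio_div_sqrt_eq hM]
  rfl
end
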